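/- arXiv:2512.05867 — 4 statements merged into one kernel-verified Lean document; each statement's English description precedes it below -/
import Mathlib

section
/- Let n ∈ (0,2), θ = (1/π)·arccos(n/2), γ₊ = 2^{3/2}·cos(πθ/2), γ₋ = γ₊ − (2^{3/2}/θ)·sin(πθ/2), and let ρ be the spectral density defined in the context. Then ρ is continuous on the closed interval [γ₋, γ₊], strictly positive on the open interval (γ₋, γ₊), and satisfies ρ(γ₋) = 0 and ρ(γ₊) = 0. -/
open Real MeasureTheory Filter Topology

/-- θ = (1/π)·arccos(n/2). -/
noncomputable def theta (n : ℝ) : ℝ := Real.arccos (n / 2) / π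

/-- γ₊ = 2^{3/2}·cos(πθ/2). -/
noncomputable def gammaP (n : ℝ) : ℝ := (2 : ℝ) ^ ((3 : ℝ) / 2) * Real.cos (π * theta n / 2)

/-- γ₋ = γ₊ − (2^{3/2}/θ)·sin(πθ/2). -/
noncomputable def gammaM (n : ℝ) : ℝ :=
  gammaP n - ((2 : ℝ) ^ ((3 : ℝ) / 2) / theta n) * Real.sin (π * theta n / 2)

/-- The spectral density ρ of the fully packed loop-O(n) model. -/
noncomputable def rho (n : ℝ) (y : ℝ) : ℝ :=
  ((2 : ℝ) ^ (-(theta n) - 1 / 2) / (π * theta n * (gammaP n - gammaM n))) *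
    (gammaP n - y) ^ (1 - theta n) *
    ((Real.sqrt (2 * gammaP n - gammaM n - y) + Real.sqrt (y - gammaM n)) ^ (2 * theta n) -
      (Real.sqrt (2 * gammaP n - gammaM n - y) - Real.sqrt (y - gammaM n)) ^ (2 * theta n))

/-!
Up to a positive constant, `ρ(y)` is `(γ₊ - y) ^ (1 - θ) * ((s + t) ^ (2θ) - (s - t) ^ (2θ))` with
`s = √(2γ₊ - γ₋ - y)` and `t = √(y - γ₋)`, where `0 ≤ t ≤ s` on `[γ₋, γ₊]`. Since `0 < θ < 1/2`,
all exponents are positive, so `ρ` is continuous; the first factor vanishes exactly at `γ₊`, and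
the second is positive by monotonicity of `x ↦ x ^ (2θ)` when `t > 0`, and zero when `t = 0`,
i.e. at `γ₋`.
-/

open Set

theorem rpow_add_sub_rpow_sub_pos {s t p : ℝ} (ht : 0 < t) (hts : t ≤ s) (hp : 0 < p) :
    0 < (s + t) ^ p - (s - t) ^ p :=
  sub_pos.2 <| rpow_lt_rpow (by linarith) (by linarith) hp

noncomputable def cutProfile (θ a b y : ℝ) : ℝ :=
  (b - y) ^ (1 - θ) *
    ((√(2 * b - a - y) + √(y - a)) ^ (2 * θ) - (√(2 * b - a - y) - √(y - a)) ^ (2 * θ))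

section cutProfile

variable {θ a b : ℝ}

theorem continuous_cutProfile (hθ0 : 0 ≤ θ) (hθ1 : θ ≤ 1) : Continuous (cutProfile θ a b) := by
  unfold cutProfile
  have h2θ : 0 ≤ 2 * θ := by linarith
  exact ((continuous_const.sub continuous_id).rpow_const fun _ => Or.inr (by linarith)).mul <|
    (((by fun_prop : Continuous fun y => √(2 * b - a - y) + √(y - a)).rpow_const
        fun _ => Or.inr h2θ).sub
      ((by fun_prop : Continuous fun y => √(2 * b - a - y) - √(y - a)).rpow_const
        fun _ => Or.inr h2θ))

@[simp]
theorem cutProfile_left : cutProfile θ a b a = 0 := by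
  simp [cutProfile]

theorem cutProfile_right (hθ : θ ≠ 1) : cutProfile θ a b b = 0 := by
  rw [cutProfile, sub_self, zero_rpow (sub_ne_zero.2 hθ.symm), zero_mul]

theorem cutProfile_pos (hθ : 0 < θ) {y : ℝ} (hy : y ∈ Ioo a b) : 0 < cutProfile θ a b y := by
  obtain ⟨hay, hyb⟩ := hy
  refine mul_pos (rpow_pos_of_pos (by linarith) _) (rpow_add_sub_rpow_sub_pos ?_ ?_ (by linarith))
  · exact sqrt_pos.2 (by linarith)
  · exact sqrt_le_sqrt (by linarith)

end cutProfile

noncomputable def rhoNorm (n : ℝ) : ℝ :=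
  (2 : ℝ) ^ (-(theta n) - 1 / 2) / (π * theta n * (gammaP n - gammaM n))

theorem rho_eq_rhoNorm_mul_cutProfile (n : ℝ) :
    rho n = fun y => rhoNorm n * cutProfile (theta n) (gammaM n) (gammaP n) y := by
  ext y
  simp only [rho, rhoNorm, cutProfile, mul_assoc]

theorem gammaP_sub_gammaM (n : ℝ) :
    gammaP n - gammaM n = (2 : ℝ) ^ ((3 : ℝ) / 2) / theta n * sin (π * theta n / 2) := by
  rw [gammaM, sub_sub_cancel]

section parameters

variable {n : ℝ}

theorem theta_mem_Ioo (hn : n ∈ Ioo (0 : ℝ) 2) : theta n ∈ Ioo 0 (1 / 2) := by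
  obtain ⟨hn0, hn2⟩ := hn
  constructor
  · exact div_pos (arccos_pos.2 (by linarith)) pi_pos
  · rw [theta, div_lt_iff₀ pi_pos]
    linarith [arccos_lt_pi_div_two.2 (show (0 : ℝ) < n / 2 by linarith)]

theorem gammaM_lt_gammaP (hn : n ∈ Ioo (0 : ℝ) 2) : gammaM n < gammaP n := by
  obtain ⟨hθ0, hθ1⟩ := theta_mem_Ioo hn
  have hsin : 0 < sin (π * theta n / 2) :=
    sin_pos_of_pos_of_lt_pi (by positivity) (by nlinarith [pi_pos])
  rw [← sub_pos, gammaP_sub_gammaM]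
  exact mul_pos (div_pos (rpow_pos_of_pos two_pos _) hθ0) hsin

theorem rhoNorm_pos (hn : n ∈ Ioo (0 : ℝ) 2) : 0 < rhoNorm n := by
  have hθ := (theta_mem_Ioo hn).1
  have hγ := sub_pos.2 (gammaM_lt_gammaP hn)
  exact div_pos (rpow_pos_of_pos two_pos _) (by positivity)

end parameters

/-- One-cut properties of the spectral density: ρ is continuous on [γ₋,γ₊],
strictly positive on (γ₋,γ₊), and vanishes at both endpoints. -/
theorem rho_one_cut_properties (n : ℝ) (hn : n ∈ Set.Ioo (0 : ℝ) 2) :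
    ContinuousOn (rho n) (Set.Icc (gammaM n) (gammaP n)) ∧
    (∀ y ∈ Set.Ioo (gammaM n) (gammaP n), 0 < rho n y) ∧
    rho n (gammaM n) = 0 ∧ rho n (gammaP n) = 0 := by
  obtain ⟨hθ0, hθ1⟩ := theta_mem_Ioo hn
  rw [rho_eq_rhoNorm_mul_cutProfile]
  refine ⟨?_, fun y hy => mul_pos (rhoNorm_pos hn) (cutProfile_pos hθ0 hy), ?_, ?_⟩
  · exact (continuous_const.mul (continuous_cutProfile hθ0.le (by linarith))).continuousOn
  · simp only [cutProfile_left, mul_zero]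
  · simp only [cutProfile_right (by linarith : theta n ≠ 1), mul_zero]
end

section
/- Let θ ∈ (0,1/2). For every complex ω with Im(ω) ≥ 0, setting α = (5−iω)/2, the following Fourier–Laplace transform identity holds: ∫_0^∞ e^{iωv} · e^{−3v} · [ (e^{2v}+√(e^{4v}−1))^{θ} − (e^{2v}−√(e^{4v}−1))^{θ} ] dv = (θ/√2) · 2^{−iω/2} · Γ((3+2θ−iω)/4) · Γ((3−2θ−iω)/4) / Γ((5−iω)/2), where the integral converges absolutely (the integrand is O(e^{(2θ−3)v}) as v → ∞). -/
/-!
Put `e^{2v} = (1 + w) / (2√w)`, i.e. `w = (e^{2v} - √(e^{4v} - 1))²`, which maps `v ∈ (0, ∞)`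
decreasingly onto `w ∈ (0, 1)`. Then `e^{2v} ± √(e^{4v} - 1) = w^{∓1/2}`, and with
`p, q = (3 ∓ 2θ - iω)/4` the integral becomes
`2^{-(1 + iω)/2} ∫₀¹ (1 - w) (w^{p-1} - w^{q-1}) (1 + w)^{-(p+q+1)} dw`.
Expanding `1 - w`, the four terms pair up through `w ↦ 1/w` into two beta prime integrals
`∫₀^∞ x^{a-1} (1 + x)^{-(a+b)} dx = Γ(a) Γ(b) / Γ(a + b)`, and
`Γ(p) Γ(q + 1) - Γ(q) Γ(p + 1) = (q - p) Γ(p) Γ(q) = θ Γ(p) Γ(q)`.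
-/

open MeasureTheory Set

lemma ofReal_cpow_eq_exp {x : ℝ} (hx : 0 < x) (z : ℂ) :
    (x : ℂ) ^ z = Complex.exp (z * Real.log x) := by
  rw [Complex.cpow_def_of_ne_zero (by exact_mod_cast hx.ne'), Complex.ofReal_log hx.le, mul_comm]

noncomputable def betaPrimeKernel (a b : ℂ) (x : ℝ) : ℂ :=
  (x : ℂ) ^ (a - 1) * ((1 + x : ℝ) : ℂ) ^ (-(a + b))

lemma hasDerivAt_div_one_sub {u : ℝ} (hu : u ≠ 1) :
    HasDerivAt (fun u : ℝ => u / (1 - u)) ((1 - u) ^ 2)⁻¹ u := by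
  have h : (1 - u) ≠ 0 := sub_ne_zero.2 hu.symm
  exact ((hasDerivAt_id' u).fun_div ((hasDerivAt_id' u).const_sub 1) h).congr_deriv
    (by field_simp; ring)

lemma injOn_div_one_sub : InjOn (fun u : ℝ => u / (1 - u)) (Ioo 0 1) := by
  intro u hu v hv huv
  have hu1 : 1 - u ≠ 0 := by linarith [hu.2]
  have hv1 : 1 - v ≠ 0 := by linarith [hv.2]
  simp only at huv
  rw [div_eq_div_iff hu1 hv1] at huv
  linarith

lemma image_div_one_sub_Ioo : (fun u : ℝ => u / (1 - u)) '' Ioo 0 1 = Ioi 0 := by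
  ext x
  constructor
  · rintro ⟨u, hu, rfl⟩
    exact div_pos hu.1 (by linarith [hu.2])
  · intro (hx : 0 < x)
    refine ⟨x / (1 + x), ⟨by positivity, (div_lt_one (by linarith)).2 (by linarith)⟩, ?_⟩
    field_simp
    ring

lemma abs_deriv_smul_betaPrimeKernel_div_one_sub (a b : ℂ) {u : ℝ} (hu : u ∈ Ioo 0 1) :
    |((1 - u) ^ 2)⁻¹| • betaPrimeKernel a b (u / (1 - u)) =
      (u : ℂ) ^ (a - 1) * (1 - (u : ℂ)) ^ (b - 1) := by
  obtain ⟨hu0, hu1⟩ := hu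
  have h1u : 0 < 1 - u := by linarith
  have hsq : ((1 - u) ^ 2)⁻¹ = Real.exp (-2 * Real.log (1 - u)) := by
    rw [neg_mul, Real.exp_neg, ← Real.log_rpow h1u, Real.exp_log (by positivity)]
    norm_num
  have h1x : 1 + u / (1 - u) = (1 - u)⁻¹ := by field_simp; ring
  rw [abs_of_pos (by positivity), Complex.real_smul, betaPrimeKernel, h1x, hsq,
    show 1 - (u : ℂ) = ((1 - u : ℝ) : ℂ) by push_cast; ring,
    ofReal_cpow_eq_exp (div_pos hu0 h1u), ofReal_cpow_eq_exp (inv_pos.2 h1u),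
    ofReal_cpow_eq_exp hu0, ofReal_cpow_eq_exp h1u, Real.log_div hu0.ne' h1u.ne', Real.log_inv,
    Complex.ofReal_exp, ← Complex.exp_add, ← Complex.exp_add, ← Complex.exp_add]
  congr 1
  push_cast
  ring

lemma integrableOn_betaPrimeKernel {a b : ℂ} (ha : 0 < a.re) (hb : 0 < b.re) :
    IntegrableOn (betaPrimeKernel a b) (Ioi 0) := by
  rw [← image_div_one_sub_Ioo, integrableOn_image_iff_integrableOn_abs_deriv_smul
    measurableSet_Ioo (fun u hu => (hasDerivAt_div_one_sub hu.2.ne).hasDerivWithinAt)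
    injOn_div_one_sub]
  refine IntegrableOn.congr_fun ?_
    (fun u hu => (abs_deriv_smul_betaPrimeKernel_div_one_sub a b hu).symm) measurableSet_Ioo
  exact ((intervalIntegrable_iff_integrableOn_Ioc_of_le zero_le_one).1
    (Complex.betaIntegral_convergent ha hb)).mono_set Ioo_subset_Ioc_self

lemma integral_betaPrimeKernel {a b : ℂ} (ha : 0 < a.re) (hb : 0 < b.re) :
    ∫ x in Ioi 0, betaPrimeKernel a b x =
      Complex.Gamma a * Complex.Gamma b / Complex.Gamma (a + b) := by
  rw [← Complex.betaIntegral_eq_Gamma_mul_div a b ha hb, ← image_div_one_sub_Ioo,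
    integral_image_eq_integral_abs_deriv_smul measurableSet_Ioo
      (fun u hu => (hasDerivAt_div_one_sub hu.2.ne).hasDerivWithinAt) injOn_div_one_sub,
    setIntegral_congr_fun measurableSet_Ioo
      (fun u hu => abs_deriv_smul_betaPrimeKernel_div_one_sub a b hu),
    Complex.betaIntegral, intervalIntegral.integral_of_le zero_le_one,
    integral_Ioc_eq_integral_Ioo]

lemma abs_deriv_smul_betaPrimeKernel_inv (a b : ℂ) {x : ℝ} (hx : 0 < x) :
    |-(x ^ 2)⁻¹| • betaPrimeKernel b a x⁻¹ = betaPrimeKernel a b x := by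
  have hsq : (x ^ 2)⁻¹ = Real.exp (-2 * Real.log x) := by
    rw [neg_mul, Real.exp_neg, ← Real.log_rpow hx, Real.exp_log (by positivity)]
    norm_num
  have h1x : 1 + x⁻¹ = (1 + x) / x := by field_simp; ring
  have h1x0 : 0 < 1 + x := by linarith
  rw [abs_neg, abs_of_pos (by positivity), Complex.real_smul, betaPrimeKernel, betaPrimeKernel,
    h1x, hsq, ofReal_cpow_eq_exp (inv_pos.2 hx), ofReal_cpow_eq_exp (div_pos h1x0 hx),
    ofReal_cpow_eq_exp hx, ofReal_cpow_eq_exp h1x0, Real.log_div h1x0.ne' hx.ne', Real.log_inv,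
    Complex.ofReal_exp, ← Complex.exp_add, ← Complex.exp_add, ← Complex.exp_add]
  congr 1
  push_cast
  ring

lemma integral_Ioo_betaPrimeKernel_eq_integral_Ioi_one (a b : ℂ) :
    ∫ x in Ioo (0 : ℝ) 1, betaPrimeKernel b a x = ∫ x in Ioi (1 : ℝ), betaPrimeKernel a b x := by
  have himage : (fun x : ℝ => x⁻¹) '' Ioi 1 = Ioo 0 1 := by
    rw [Set.image_inv_eq_inv, inv_Ioi₀ one_pos, inv_one]
  rw [← himage, integral_image_eq_integral_abs_deriv_smul measurableSet_Ioi
    (fun x hx => (hasDerivAt_inv (by linarith [mem_Ioi.1 hx] : x ≠ 0)).hasDerivWithinAt)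
    inv_injective.injOn]
  exact setIntegral_congr_fun measurableSet_Ioi
    (fun x hx => abs_deriv_smul_betaPrimeKernel_inv a b (zero_lt_one.trans hx))

/-- The second summand contributes the first one's integral over `(1, ∞)`, by `x ↦ 1/x`. -/
lemma integral_Ioo_betaPrimeKernel_add_swap {a b : ℂ} (ha : 0 < a.re) (hb : 0 < b.re) :
    IntegrableOn (fun x => betaPrimeKernel a b x + betaPrimeKernel b a x) (Ioo 0 1) ∧
    ∫ x in Ioo (0 : ℝ) 1, (betaPrimeKernel a b x + betaPrimeKernel b a x) =
      Complex.Gamma a * Complex.Gamma b / Complex.Gamma (a + b) := by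
  have hab := integrableOn_betaPrimeKernel ha hb
  have hba := integrableOn_betaPrimeKernel hb ha
  refine ⟨(hab.mono_set Ioo_subset_Ioi_self).add (hba.mono_set Ioo_subset_Ioi_self), ?_⟩
  rw [integral_add (hab.mono_set Ioo_subset_Ioi_self) (hba.mono_set Ioo_subset_Ioi_self),
    integral_Ioo_betaPrimeKernel_eq_integral_Ioi_one a b, ← integral_Ioc_eq_integral_Ioo,
    ← setIntegral_union (Ioc_disjoint_Ioi le_rfl) measurableSet_Ioi
      (hab.mono_set Ioc_subset_Ioi_self) (hab.mono_set (Ioi_subset_Ioi zero_le_one)),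
    Ioc_union_Ioi_eq_Ioi zero_le_one, integral_betaPrimeKernel ha hb]

/-- The inverse of `v ↦ (e^{2v} - √(e^{4v} - 1))²`, which maps `(0, ∞)` onto `(0, 1)`. -/
noncomputable def profileSubst (w : ℝ) : ℝ := Real.log ((1 + w) / (2 * √w)) / 2

lemma exp_two_mul_profileSubst {w : ℝ} (hw : 0 < w) :
    Real.exp (2 * profileSubst w) = (1 + w) / (2 * √w) := by
  rw [profileSubst, mul_div_cancel₀ _ two_ne_zero, Real.exp_log (by positivity)]

lemma sqrt_exp_four_mul_profileSubst_sub_one {w : ℝ} (hw : 0 < w) (hw1 : w ≤ 1) :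
    √(Real.exp (4 * profileSubst w) - 1) = (1 - w) / (2 * √w) := by
  have hsq : Real.exp (4 * profileSubst w) - 1 = ((1 - w) / (2 * √w)) ^ 2 := by
    have hs2 : √w ^ 2 = w := Real.sq_sqrt hw.le
    rw [show 4 * profileSubst w = 2 * profileSubst w + 2 * profileSubst w by ring, Real.exp_add,
      exp_two_mul_profileSubst hw]
    field_simp
    rw [hs2]
    ring
  rw [hsq, Real.sqrt_sq (div_nonneg (by linarith) (by positivity))]

lemma exp_two_mul_profileSubst_add_sqrt {w : ℝ} (hw : 0 < w) (hw1 : w ≤ 1) :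
    Real.exp (2 * profileSubst w) + √(Real.exp (4 * profileSubst w) - 1) = (√w)⁻¹ := by
  rw [exp_two_mul_profileSubst hw, sqrt_exp_four_mul_profileSubst_sub_one hw hw1]
  field_simp
  ring

lemma exp_two_mul_profileSubst_sub_sqrt {w : ℝ} (hw : 0 < w) (hw1 : w ≤ 1) :
    Real.exp (2 * profileSubst w) - √(Real.exp (4 * profileSubst w) - 1) = √w := by
  have hs2 : √w ^ 2 = w := Real.sq_sqrt hw.le
  rw [exp_two_mul_profileSubst hw, sqrt_exp_four_mul_profileSubst_sub_one hw hw1]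
  field_simp
  rw [hs2]
  ring

lemma hasDerivAt_profileSubst {w : ℝ} (hw : 0 < w) :
    HasDerivAt profileSubst ((w - 1) / (4 * w * (1 + w))) w := by
  have h := (((hasDerivAt_id' w).const_add 1).fun_div
    ((Real.hasDerivAt_sqrt hw.ne').const_mul 2) (by positivity)).log
    (by positivity) |>.div_const 2
  refine h.congr_deriv ?_
  have hs2 : √w ^ 2 = w := Real.sq_sqrt hw.le
  field_simp
  rw [hs2]
  ring

lemma strictAntiOn_profileSubst : StrictAntiOn profileSubst (Ioo 0 1) := by
  refine strictAntiOn_of_deriv_neg (convex_Ioo 0 1)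
    (fun w hw => (hasDerivAt_profileSubst hw.1).continuousAt.continuousWithinAt) ?_
  intro w hw
  rw [interior_Ioo] at hw
  rw [(hasDerivAt_profileSubst hw.1).deriv]
  exact div_neg_of_neg_of_pos (by linarith [hw.2]) (by nlinarith [hw.1])

lemma image_profileSubst_Ioo : profileSubst '' Ioo 0 1 = Ioi 0 := by
  ext v
  constructor
  · rintro ⟨w, ⟨hw0, hw1⟩, rfl⟩
    have hs2 : √w ^ 2 = w := Real.sq_sqrt hw0.le
    have hs1 : √w ≠ 1 := fun h => by nlinarith
    have hgt : 1 < (1 + w) / (2 * √w) := by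
      rw [one_lt_div (by positivity)]
      nlinarith [sq_pos_of_ne_zero (sub_ne_zero.2 hs1)]
    exact div_pos (Real.log_pos hgt) two_pos
  · intro (hv : 0 < v)
    have hs1 : 1 < Real.exp (2 * v) := Real.one_lt_exp_iff.2 (by linarith)
    obtain ⟨r, hr2, hr, hrs⟩ :
        ∃ r : ℝ, r ^ 2 = Real.exp (2 * v) ^ 2 - 1 ∧ 0 < r ∧ r < Real.exp (2 * v) :=
      ⟨√(Real.exp (2 * v) ^ 2 - 1), Real.sq_sqrt (by nlinarith), Real.sqrt_pos.2 (by nlinarith),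
        by nlinarith [Real.sq_sqrt (by nlinarith : (0 : ℝ) ≤ Real.exp (2 * v) ^ 2 - 1)]⟩
    refine ⟨(Real.exp (2 * v) - r) ^ 2, ⟨by nlinarith, by nlinarith⟩, ?_⟩
    refine mul_left_cancel₀ two_ne_zero (Real.exp_injective ?_)
    rw [exp_two_mul_profileSubst (by nlinarith), Real.sqrt_sq (by linarith),
      div_eq_iff (by nlinarith)]
    linear_combination hr2

lemma betaPrimeKernel_combination (p q : ℂ) {w : ℝ} (hw : 0 < w) :
    betaPrimeKernel p (q + 1) w + betaPrimeKernel (q + 1) p w -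
        (betaPrimeKernel q (p + 1) w + betaPrimeKernel (p + 1) q w) =
      ((1 - w : ℝ) : ℂ) * ((w : ℂ) ^ (p - 1) - (w : ℂ) ^ (q - 1)) *
        ((1 + w : ℝ) : ℂ) ^ (-(p + q + 1)) := by
  have hw' : (w : ℂ) ≠ 0 := by exact_mod_cast hw.ne'
  have hshift (a : ℂ) : (w : ℂ) ^ (a + 1 - 1) = (w : ℂ) ^ (a - 1) * w := by
    rw [show a + 1 - 1 = (a - 1) + 1 by ring, Complex.cpow_add _ _ hw', Complex.cpow_one]
  simp only [betaPrimeKernel, hshift, show q + 1 + p = p + q + 1 by ring,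
    show p + (q + 1) = p + q + 1 by ring, show q + (p + 1) = p + q + 1 by ring,
    show p + 1 + q = p + q + 1 by ring]
  push_cast
  ring

lemma integral_Ioo_one_sub_mul_cpow_sub_cpow {p q : ℂ} (hp : 0 < p.re) (hq : 0 < q.re) :
    IntegrableOn (fun w : ℝ => ((1 - w : ℝ) : ℂ) * ((w : ℂ) ^ (p - 1) - (w : ℂ) ^ (q - 1)) *
        ((1 + w : ℝ) : ℂ) ^ (-(p + q + 1))) (Ioo 0 1) ∧
    ∫ w in Ioo (0 : ℝ) 1, ((1 - w : ℝ) : ℂ) * ((w : ℂ) ^ (p - 1) - (w : ℂ) ^ (q - 1)) *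
        ((1 + w : ℝ) : ℂ) ^ (-(p + q + 1)) =
      (q - p) * Complex.Gamma p * Complex.Gamma q / Complex.Gamma (p + q + 1) := by
  have hp1 : 0 < (p + 1).re := by simpa using hp.trans (lt_add_one _)
  have hq1 : 0 < (q + 1).re := by simpa using hq.trans (lt_add_one _)
  obtain ⟨hint₁, hval₁⟩ := integral_Ioo_betaPrimeKernel_add_swap hp hq1
  obtain ⟨hint₂, hval₂⟩ := integral_Ioo_betaPrimeKernel_add_swap hq hp1
  have hcomb := fun w (hw : w ∈ Ioo (0 : ℝ) 1) => betaPrimeKernel_combination p q hw.1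
  refine ⟨(hint₁.sub hint₂).congr_fun hcomb measurableSet_Ioo, ?_⟩
  rw [← setIntegral_congr_fun measurableSet_Ioo hcomb, integral_sub hint₁ hint₂, hval₁, hval₂,
    Complex.Gamma_add_one p (fun h => by simp [h] at hp),
    Complex.Gamma_add_one q (fun h => by simp [h] at hq),
    show p + (q + 1) = p + q + 1 by ring, show q + (p + 1) = p + q + 1 by ring]
  ring

noncomputable def rplusProfileIntegrand (θ : ℝ) (ω : ℂ) (v : ℝ) : ℂ :=
  Complex.exp (Complex.I * ω * (v : ℂ)) * ((Real.exp (-3 * v) : ℝ) : ℂ) *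
    (((Real.exp (2 * v) + Real.sqrt (Real.exp (4 * v) - 1)) ^ θ -
        (Real.exp (2 * v) - Real.sqrt (Real.exp (4 * v) - 1)) ^ θ : ℝ) : ℂ)

lemma abs_deriv_smul_rplusProfileIntegrand_profileSubst (θ : ℝ) (ω : ℂ) {w : ℝ}
    (hw : w ∈ Ioo 0 1) :
    |(w - 1) / (4 * w * (1 + w))| • rplusProfileIntegrand θ ω (profileSubst w) =
      ((√2)⁻¹ : ℝ) * Complex.exp (-(Complex.I * ω) / 2 * Real.log 2) *
        (((1 - w : ℝ) : ℂ) * ((w : ℂ) ^ ((3 - 2 * θ - Complex.I * ω) / 4 - 1) -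
          (w : ℂ) ^ ((3 + 2 * θ - Complex.I * ω) / 4 - 1)) *
          ((1 + w : ℝ) : ℂ) ^
            (-((3 - 2 * θ - Complex.I * ω) / 4 + (3 + 2 * θ - Complex.I * ω) / 4 + 1))) := by
  obtain ⟨hw0, hw1⟩ := hw
  have h1w : 0 < 1 + w := by linarith
  have hψ : profileSubst w = (Real.log (1 + w) - Real.log 2 - Real.log w / 2) / 2 := by
    rw [profileSubst, Real.log_div h1w.ne' (by positivity),
      Real.log_mul two_ne_zero (by positivity), Real.log_sqrt hw0.le]
    ring
  have habs : |(w - 1) / (4 * w * (1 + w))| =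
      (1 - w) * Real.exp (-(2 * Real.log 2 + Real.log w + Real.log (1 + w))) := by
    rw [abs_div, abs_of_neg (by linarith), abs_of_pos (by positivity), Real.exp_neg,
      Real.exp_add, Real.exp_add, Real.exp_log h1w, Real.exp_log hw0,
      ← Real.log_rpow two_pos, Real.exp_log (by positivity)]
    norm_num
    field_simp
  have hdiff : (√w)⁻¹ ^ θ - √w ^ θ =
      Real.exp (-(θ * Real.log w / 2)) - Real.exp (θ * Real.log w / 2) := by
    rw [Real.rpow_def_of_pos (inv_pos.2 (Real.sqrt_pos.2 hw0)),
      Real.rpow_def_of_pos (Real.sqrt_pos.2 hw0), Real.log_inv, Real.log_sqrt hw0.le]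
    ring_nf
  have hsqrt2 : √2 = Real.exp (Real.log 2 / 2) := by
    rw [Real.exp_half, Real.exp_log two_pos]
  rw [rplusProfileIntegrand, exp_two_mul_profileSubst_add_sqrt hw0 hw1.le,
    exp_two_mul_profileSubst_sub_sqrt hw0 hw1.le, hdiff, habs, hsqrt2, hψ,
    ofReal_cpow_eq_exp hw0, ofReal_cpow_eq_exp hw0, ofReal_cpow_eq_exp h1w, Complex.real_smul]
  push_cast
  -- Both sides are `(1 - w) (e^A - e^B)` with the same exponents up to `ring`.
  generalize (1 - (w : ℂ)) = k
  simp only [mul_sub, sub_mul, mul_assoc, mul_left_comm _ k, ← Complex.exp_add,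
    ← Complex.exp_neg]
  ring_nf

/-- The Fourier–Laplace transform identity for the profile of r₊: for Im(ω) ≥ 0 it holds
  ∫_0^∞ e^{iωv} e^{−3v} [ (e^{2v}+√(e^{4v}−1))^θ − (e^{2v}−√(e^{4v}−1))^θ ] dv
    = (θ/√2) · 2^{−iω/2} · Γ((3+2θ−iω)/4)·Γ((3−2θ−iω)/4) / Γ((5−iω)/2),
where 2^{z} := exp(z·log 2), with absolute convergence of the integral. -/
theorem fourier_laplace_rplus_profile (θ : ℝ) (hθ : θ ∈ Set.Ioo (0 : ℝ) (1 / 2))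
    (ω : ℂ) (hω : 0 ≤ ω.im) :
    MeasureTheory.IntegrableOn
      (fun v : ℝ =>
        Complex.exp (Complex.I * ω * (v : ℂ)) * ((Real.exp (-3 * v) : ℝ) : ℂ) *
          (((Real.exp (2 * v) + Real.sqrt (Real.exp (4 * v) - 1)) ^ θ -
              (Real.exp (2 * v) - Real.sqrt (Real.exp (4 * v) - 1)) ^ θ : ℝ) : ℂ))
      (Set.Ioi 0) ∧
    ∫ v in Set.Ioi (0 : ℝ),
        Complex.exp (Complex.I * ω * (v : ℂ)) * ((Real.exp (-3 * v) : ℝ) : ℂ) *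
          (((Real.exp (2 * v) + Real.sqrt (Real.exp (4 * v) - 1)) ^ θ -
              (Real.exp (2 * v) - Real.sqrt (Real.exp (4 * v) - 1)) ^ θ : ℝ) : ℂ) =
      ((θ / Real.sqrt 2 : ℝ) : ℂ) *
        Complex.exp ((-(Complex.I * ω) / 2) * (Real.log 2 : ℂ)) *
        Complex.Gamma ((3 + 2 * (θ : ℂ) - Complex.I * ω) / 4) *
        Complex.Gamma ((3 - 2 * (θ : ℂ) - Complex.I * ω) / 4) /
        Complex.Gamma ((5 - Complex.I * ω) / 2) := by
  obtain ⟨hθ0, hθ1⟩ := hθ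
  have hp : 0 < ((3 - 2 * θ - Complex.I * ω) / 4 : ℂ).re := by
    simpa using show 0 < 3 - 2 * θ + ω.im by linarith
  have hq : 0 < ((3 + 2 * θ - Complex.I * ω) / 4 : ℂ).re := by
    simpa using show 0 < 3 + 2 * θ + ω.im by linarith
  obtain ⟨hint, hval⟩ := integral_Ioo_one_sub_mul_cpow_sub_cpow hp hq
  have hsubst := fun w (hw : w ∈ Ioo (0 : ℝ) 1) =>
    abs_deriv_smul_rplusProfileIntegrand_profileSubst θ ω hw
  have hderiv : ∀ w ∈ Ioo (0 : ℝ) 1,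
      HasDerivWithinAt profileSubst ((w - 1) / (4 * w * (1 + w))) (Ioo 0 1) w :=
    fun w hw => (hasDerivAt_profileSubst hw.1).hasDerivWithinAt
  change IntegrableOn (rplusProfileIntegrand θ ω) (Ioi 0) ∧
    ∫ v in Ioi 0, rplusProfileIntegrand θ ω v = _
  rw [← image_profileSubst_Ioo,
    integrableOn_image_iff_integrableOn_abs_deriv_smul measurableSet_Ioo hderiv
      strictAntiOn_profileSubst.injOn,
    integral_image_eq_integral_abs_deriv_smul measurableSet_Ioo hderiv
      strictAntiOn_profileSubst.injOn,
    setIntegral_congr_fun measurableSet_Ioo hsubst, integral_const_mul, hval]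
  refine ⟨IntegrableOn.congr_fun (hint.const_mul _) (fun w hw => (hsubst w hw).symm)
    measurableSet_Ioo, ?_⟩
  rw [show ((3 - 2 * θ - Complex.I * ω) / 4 + (3 + 2 * θ - Complex.I * ω) / 4 + 1 : ℂ) =
    (5 - Complex.I * ω) / 2 by ring]
  push_cast
  ring
end

section
/- Let θ ∈ (0,1) and let α be a complex number with Re(α) > θ + 1. Then ∫_0^∞ (cosh u)^{−α} · sinh(θu) · sinh(u) du = θ · 2^{α−3} · Γ((α+θ−1)/2) · Γ((α−θ−1)/2) / Γ(α), where (cosh u)^{−α} := exp(−α·log(cosh u)) and the integral converges absolutely. -/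
/-!
By the product-to-sum formula `2 sinh(θu) sinh u = cosh((θ+1)u) - cosh((θ-1)u)` and evenness, the
integral is a quarter of the difference of two whole-line integrals `∫ (cosh u)^{-α} cosh(βu) du`.
The substitution `t = σ(2u) = e^u / (2 cosh u)` turns `∫ (cosh u)^{-α} e^{βu} du` into
`2^{α-1} B((α+β)/2, (α-β)/2)`. For `β = θ ± 1` the relation `Γ(s+1) = s Γ(s)` shows that the two
Beta values differ by `θ Γ((α+θ-1)/2) Γ((α-θ-1)/2) / Γ(α)`.
-/

open Real MeasureTheory Set

namespace Real

lemma sigmoid_two_mul (u : ℝ) : sigmoid (2 * u) = exp u / (2 * cosh u) := by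
  rw [sigmoid_def, cosh_eq]
  field_simp
  rw [add_mul, one_mul, ← exp_add]
  ring_nf

lemma log_sigmoid_two_mul (u : ℝ) : log (sigmoid (2 * u)) = u - log 2 - log (cosh u) := by
  rw [sigmoid_two_mul, log_div (exp_ne_zero u) (by positivity),
    log_mul two_ne_zero (cosh_pos u).ne', log_exp]
  ring

lemma log_one_sub_sigmoid_two_mul (u : ℝ) :
    log (1 - sigmoid (2 * u)) = -u - log 2 - log (cosh u) := by
  rw [← sigmoid_neg, ← mul_neg, log_sigmoid_two_mul, cosh_neg]

lemma hasDerivAt_sigmoid_two_mul (u : ℝ) :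
    HasDerivAt (fun u => sigmoid (2 * u)) (2 * (sigmoid (2 * u) * (1 - sigmoid (2 * u)))) u := by
  have := (hasDerivAt_sigmoid (2 * u)).comp u ((hasDerivAt_id u).const_mul 2)
  rwa [mul_one, mul_comm] at this

lemma injective_sigmoid_two_mul : Function.Injective fun u : ℝ => sigmoid (2 * u) :=
  sigmoid_injective.comp (mul_right_injective₀ two_ne_zero)

lemma image_univ_sigmoid_two_mul : (fun u : ℝ => sigmoid (2 * u)) '' univ = Ioo 0 1 := by
  rw [image_univ, ← range_sigmoid]
  exact (mul_left_surjective₀ two_ne_zero).range_comp sigmoid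

end Real

namespace Complex

lemma integrableOn_Ioo_betaIntegrand {u v : ℂ} (hu : 0 < u.re) (hv : 0 < v.re) :
    IntegrableOn (fun x : ℝ => (x : ℂ) ^ (u - 1) * (1 - (x : ℂ)) ^ (v - 1)) (Ioo 0 1) :=
  ((intervalIntegrable_iff_integrableOn_Ioo_of_le zero_le_one).mp
    (betaIntegral_convergent hu hv))

lemma setIntegral_Ioo_betaIntegrand {u v : ℂ} (hu : 0 < u.re) (hv : 0 < v.re) :
    ∫ x in Ioo (0 : ℝ) 1, (x : ℂ) ^ (u - 1) * (1 - (x : ℂ)) ^ (v - 1) =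
      Gamma u * Gamma v / Gamma (u + v) := by
  rw [Gamma_mul_Gamma_eq_betaIntegral hu hv, mul_div_cancel_left₀ _
    (Gamma_ne_zero_of_re_pos (by rw [add_re]; positivity)), betaIntegral,
    intervalIntegral.integral_of_le zero_le_one, integral_Ioc_eq_integral_Ioo]

lemma ofReal_cpow_eq_exp {x : ℝ} (hx : 0 < x) (w : ℂ) :
    (x : ℂ) ^ w = exp (Real.log x * w) := by
  rw [cpow_def_of_ne_zero (ofReal_ne_zero.mpr hx.ne'), ofReal_log hx.le]

lemma Gamma_mul_Gamma_sub_Gamma_mul_Gamma {α θ : ℂ} (h₁ : (α + θ - 1) / 2 ≠ 0)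
    (h₂ : (α - θ - 1) / 2 ≠ 0) :
    Gamma ((α + (θ + 1)) / 2) * Gamma ((α - (θ + 1)) / 2) -
        Gamma ((α + (θ - 1)) / 2) * Gamma ((α - (θ - 1)) / 2) =
      θ * Gamma ((α + θ - 1) / 2) * Gamma ((α - θ - 1) / 2) := by
  rw [show (α + (θ + 1)) / 2 = (α + θ - 1) / 2 + 1 by ring,
    show (α - (θ - 1)) / 2 = (α - θ - 1) / 2 + 1 by ring, Gamma_add_one _ h₁, Gamma_add_one _ h₂]
  ring_nf

lemma exp_add_two_mul_log_two (z : ℂ) :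
    exp ((z + 2) * Real.log 2) = 4 * exp (z * Real.log 2) := by
  have h2 : exp (Real.log 2) = 2 := by
    rw [← ofReal_exp, Real.exp_log two_pos, ofReal_ofNat]
  rw [add_mul, two_mul, exp_add, exp_add, h2]
  ring

end Complex

lemma integral_Ioi_zero_eq_half_integral_of_even {E : Type*} [NormedAddCommGroup E]
    [NormedSpace ℝ E] {f : ℝ → E} (hf : Integrable f) (heven : ∀ x, f (-x) = f x) :
    ∫ x in Ioi 0, f x = (2⁻¹ : ℝ) • ∫ x, f x := by
  have hIic : ∫ x in Iic 0, f x = ∫ x in Ioi 0, f x := by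
    simpa only [heven, neg_zero] using integral_comp_neg_Iic 0 f
  rw [← intervalIntegral.integral_Iic_add_Ioi hf.integrableOn hf.integrableOn, hIic, ← two_smul ℝ,
    smul_smul, inv_mul_cancel₀ two_ne_zero, one_smul]

section CoshBeta

variable {α : ℂ}

lemma abs_deriv_smul_betaIntegrand_sigmoid_two_mul (β : ℂ) (u : ℝ) :
    |2 * (sigmoid (2 * u) * (1 - sigmoid (2 * u)))| •
      (Complex.exp ((α - 1) * Real.log 2) * ((sigmoid (2 * u) : ℂ) ^ ((α + β) / 2 - 1) *
        (1 - (sigmoid (2 * u) : ℂ)) ^ ((α - β) / 2 - 1))) =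
      Complex.exp (-α * Real.log (cosh u)) * Complex.exp (β * u) := by
  have hs : 0 < sigmoid (2 * u) := sigmoid_pos _
  have hs' : 0 < 1 - sigmoid (2 * u) := sub_pos.mpr (sigmoid_lt_one _)
  have hjac : 2 * (sigmoid (2 * u) * (1 - sigmoid (2 * u))) =
      exp (Real.log 2 + Real.log (sigmoid (2 * u)) + Real.log (1 - sigmoid (2 * u))) := by
    rw [exp_add, exp_add, exp_log two_pos, exp_log hs, exp_log hs', mul_assoc]
  rw [abs_of_pos (by positivity), hjac, Complex.real_smul, ← Complex.ofReal_one,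
    ← Complex.ofReal_sub, Complex.ofReal_cpow_eq_exp hs, Complex.ofReal_cpow_eq_exp hs',
    log_sigmoid_two_mul, log_one_sub_sigmoid_two_mul, Complex.ofReal_exp]
  simp only [← Complex.exp_add]
  congr 1
  push_cast
  ring

lemma re_half_add_pos_and_re_half_sub_pos {β : ℂ} (h : |β.re| < α.re) :
    0 < ((α + β) / 2).re ∧ 0 < ((α - β) / 2).re := by
  simp only [Complex.div_ofNat_re, Complex.add_re, Complex.sub_re]
  constructor <;> linarith [le_abs_self β.re, neg_abs_le β.re]

lemma integrable_exp_neg_mul_log_cosh_mul_exp {β : ℂ} (h : |β.re| < α.re) :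
    Integrable fun u : ℝ => Complex.exp (-α * Real.log (cosh u)) * Complex.exp (β * u) := by
  obtain ⟨ha, hb⟩ := re_half_add_pos_and_re_half_sub_pos h
  have hbeta : IntegrableOn (fun t : ℝ => Complex.exp ((α - 1) * Real.log 2) *
      ((t : ℂ) ^ ((α + β) / 2 - 1) * (1 - (t : ℂ)) ^ ((α - β) / 2 - 1))) (Ioo 0 1) :=
    (Complex.integrableOn_Ioo_betaIntegrand ha hb).const_mul _
  rw [← image_univ_sigmoid_two_mul, integrableOn_image_iff_integrableOn_abs_deriv_smul
    MeasurableSet.univ (fun u _ => (hasDerivAt_sigmoid_two_mul u).hasDerivWithinAt)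
    injective_sigmoid_two_mul.injOn] at hbeta
  simpa only [abs_deriv_smul_betaIntegrand_sigmoid_two_mul, integrableOn_univ] using hbeta

lemma integral_exp_neg_mul_log_cosh_mul_exp {β : ℂ} (h : |β.re| < α.re) :
    ∫ u : ℝ, Complex.exp (-α * Real.log (cosh u)) * Complex.exp (β * u) =
      Complex.exp ((α - 1) * Real.log 2) *
        (Complex.Gamma ((α + β) / 2) * Complex.Gamma ((α - β) / 2) / Complex.Gamma α) := by
  obtain ⟨ha, hb⟩ := re_half_add_pos_and_re_half_sub_pos h
  calc ∫ u : ℝ, Complex.exp (-α * Real.log (cosh u)) * Complex.exp (β * u)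
      = ∫ t in (fun u : ℝ => sigmoid (2 * u)) '' univ, Complex.exp ((α - 1) * Real.log 2) *
          ((t : ℂ) ^ ((α + β) / 2 - 1) * (1 - (t : ℂ)) ^ ((α - β) / 2 - 1)) := by
        rw [integral_image_eq_integral_abs_deriv_smul MeasurableSet.univ
          (fun u _ => (hasDerivAt_sigmoid_two_mul u).hasDerivWithinAt)
          injective_sigmoid_two_mul.injOn]
        simp only [abs_deriv_smul_betaIntegrand_sigmoid_two_mul, setIntegral_univ]
    _ = _ := by
        rw [image_univ_sigmoid_two_mul, integral_const_mul,
          Complex.setIntegral_Ioo_betaIntegrand ha hb, ← add_div, add_add_sub_cancel,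
          add_self_div_two]

lemma exp_neg_mul_log_cosh_mul_cosh_eq (β u : ℝ) :
    Complex.exp (-α * Real.log (cosh u)) * (cosh (β * u) : ℂ) =
      (Complex.exp (-α * Real.log (cosh u)) * Complex.exp (β * u) +
        Complex.exp (-α * Real.log (cosh u)) * Complex.exp ((-β : ℝ) * u)) / 2 := by
  rw [Complex.ofReal_cosh, Complex.cosh, Complex.ofReal_mul, Complex.ofReal_neg, neg_mul (β : ℂ)]
  ring

lemma integrable_exp_neg_mul_log_cosh_mul_cosh {β : ℝ} (h : |β| < α.re) :
    Integrable fun u : ℝ => Complex.exp (-α * Real.log (cosh u)) * (cosh (β * u) : ℂ) := by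
  simp only [exp_neg_mul_log_cosh_mul_cosh_eq]
  refine ((integrable_exp_neg_mul_log_cosh_mul_exp ?_).add
    (integrable_exp_neg_mul_log_cosh_mul_exp ?_)).div_const 2 <;> simpa

lemma integral_exp_neg_mul_log_cosh_mul_cosh {β : ℝ} (h : |β| < α.re) :
    ∫ u : ℝ, Complex.exp (-α * Real.log (cosh u)) * (cosh (β * u) : ℂ) =
      Complex.exp ((α - 1) * Real.log 2) *
        (Complex.Gamma ((α + β) / 2) * Complex.Gamma ((α - β) / 2) / Complex.Gamma α) := by
  have hβ : |(β : ℂ).re| < α.re := by simpa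
  have hβ' : |((-β : ℝ) : ℂ).re| < α.re := by simpa
  simp only [exp_neg_mul_log_cosh_mul_cosh_eq]
  rw [integral_div, integral_add (integrable_exp_neg_mul_log_cosh_mul_exp hβ)
    (integrable_exp_neg_mul_log_cosh_mul_exp hβ'), integral_exp_neg_mul_log_cosh_mul_exp hβ,
    integral_exp_neg_mul_log_cosh_mul_exp hβ', Complex.ofReal_neg, sub_neg_eq_add,
    ← sub_eq_add_neg]
  ring

lemma exp_neg_mul_log_cosh_mul_sinh_mul_sinh (θ u : ℝ) :
    Complex.exp (-α * Real.log (cosh u)) * (sinh (θ * u) : ℂ) * (sinh u : ℂ) =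
      (Complex.exp (-α * Real.log (cosh u)) * (cosh ((θ + 1) * u) : ℂ) -
        Complex.exp (-α * Real.log (cosh u)) * (cosh ((θ - 1) * u) : ℂ)) / 2 := by
  rw [add_mul, sub_mul, one_mul, cosh_add, cosh_sub]
  push_cast
  ring

end CoshBeta

/-- The key integral evaluation:
  ∫_0^∞ (cosh u)^{−α} sinh(θu) sinh(u) du
    = θ · 2^{α−3} · Γ((α+θ−1)/2)·Γ((α−θ−1)/2) / Γ(α)
for θ ∈ (0,1) and Re(α) > θ + 1, where (cosh u)^{−α} := exp(−α·log(cosh u)) and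
2^{z} := exp(z·log 2), with absolute convergence of the integral. -/
theorem cosh_sinh_beta_integral (θ : ℝ) (hθ : θ ∈ Set.Ioo (0 : ℝ) 1)
    (α : ℂ) (hα : θ + 1 < α.re) :
    MeasureTheory.IntegrableOn
      (fun u : ℝ =>
        Complex.exp (-α * (Real.log (Real.cosh u) : ℂ)) *
          ((Real.sinh (θ * u) : ℝ) : ℂ) * ((Real.sinh u : ℝ) : ℂ))
      (Set.Ioi 0) ∧
    ∫ u in Set.Ioi (0 : ℝ),
        Complex.exp (-α * (Real.log (Real.cosh u) : ℂ)) *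
          ((Real.sinh (θ * u) : ℝ) : ℂ) * ((Real.sinh u : ℝ) : ℂ) =
      (θ : ℂ) * Complex.exp ((α - 3) * (Real.log 2 : ℂ)) *
        Complex.Gamma ((α + (θ : ℂ) - 1) / 2) * Complex.Gamma ((α - (θ : ℂ) - 1) / 2) /
        Complex.Gamma α := by
  have hplus : |θ + 1| < α.re := by rw [abs_lt]; constructor <;> linarith [hθ.1]
  have hminus : |θ - 1| < α.re := by rw [abs_lt]; constructor <;> linarith [hθ.1]
  have hint : Integrable fun u : ℝ =>
      (Complex.exp (-α * Real.log (cosh u)) * (cosh ((θ + 1) * u) : ℂ) -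
        Complex.exp (-α * Real.log (cosh u)) * (cosh ((θ - 1) * u) : ℂ)) / 2 :=
    ((integrable_exp_neg_mul_log_cosh_mul_cosh hplus).sub
      (integrable_exp_neg_mul_log_cosh_mul_cosh hminus)).div_const 2
  simp only [exp_neg_mul_log_cosh_mul_sinh_mul_sinh]
  refine ⟨hint.integrableOn, ?_⟩
  have hp : (α - θ - 1) / 2 ≠ 0 := by
    intro h; have := congrArg Complex.re h; simp at this; linarith
  have hp' : (α + θ - 1) / 2 ≠ 0 := by
    intro h; have := congrArg Complex.re h; simp at this; linarith [hθ.1]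
  have hΓ := Complex.Gamma_mul_Gamma_sub_Gamma_mul_Gamma hp' hp
  have hC := Complex.exp_add_two_mul_log_two (α - 3)
  rw [sub_add, show (3 : ℂ) - 2 = 1 by norm_num] at hC
  rw [integral_Ioi_zero_eq_half_integral_of_even hint
      (fun u => by simp only [cosh_neg, mul_neg]), integral_div,
    integral_sub (integrable_exp_neg_mul_log_cosh_mul_cosh hplus)
      (integrable_exp_neg_mul_log_cosh_mul_cosh hminus),
    integral_exp_neg_mul_log_cosh_mul_cosh hplus, integral_exp_neg_mul_log_cosh_mul_cosh hminus,
    Complex.real_smul]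
  push_cast
  linear_combination (Complex.exp ((α - 1) * Real.log 2) / (4 * Complex.Gamma α)) * hΓ +
    (θ * Complex.Gamma ((α + θ - 1) / 2) * Complex.Gamma ((α - θ - 1) / 2) /
      (4 * Complex.Gamma α)) * hC
end

section
/- Let θ ∈ (0,1) and a > 0. Let (G_i)_{i≥1} be i.i.d. non-negative integer-valued random variables with P(G_i = j) = 2^{−j−1} for every integer j ≥ 0, set N_ℓ = G_1 + ⋯ + G_ℓ, and let τ be a non-negative integer-valued random variable, independent of the sequence (G_i), such that m^{1−θ}·P(τ > m) → a as m → ∞. Then ℓ^{1−θ}·P(τ > N_ℓ) → a as ℓ → ∞. -/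
/-!
`N_ℓ` is a sum of `ℓ` independent variables of mean `1` and finite variance, so by Chebyshev
`P(|N_ℓ - ℓ| ≥ εℓ) = O(1/ℓ)`, which is `o(ℓ^(θ-1))` since `θ > 0`. Off that event,
`{τ > N_ℓ}` lies between `{τ > ⌈(1+ε)ℓ⌉}` and `{τ > ⌊(1-ε)ℓ⌋}`, whose probabilities are
`~ a (1 ± ε)^(θ-1) ℓ^(θ-1)` by the tail assumption; letting `ε → 0` gives the limit `a`.
-/

open MeasureTheory ProbabilityTheory Filter Topology Finset

lemma tendsto_of_forall_eventually_between {ι κ : Type*} {l : Filter ι} {F : Filter κ} [F.NeBot]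
    {u : ι → ℝ} {a : ℝ} {lo hi : κ → ℝ} (hlo : Tendsto lo F (𝓝 a)) (hhi : Tendsto hi F (𝓝 a))
    (h : ∀ᶠ ε in F, ∀ δ > 0, ∀ᶠ i in l, u i ∈ Set.Ioo (lo ε - δ) (hi ε + δ)) :
    Tendsto u l (𝓝 a) := by
  rw [Metric.tendsto_nhds]
  intro η hη
  obtain ⟨ε, hεlo, hεhi, hε⟩ := ((hlo.eventually_const_lt (by linarith : a - η / 2 < a)).and
    ((hhi.eventually_lt_const (by linarith : a < a + η / 2)).and h)).exists
  filter_upwards [hε (η / 2) (half_pos hη)] with i ⟨hlow, hup⟩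
  rw [Real.dist_eq, abs_sub_lt_iff]
  constructor <;> linarith

lemma tendsto_rpow_mul_comp_of_tendsto_div {f : ℕ → ℝ} {β a c : ℝ}
    (hf : Tendsto (fun m : ℕ => (m : ℝ) ^ β * f m) atTop (𝓝 a)) {m : ℕ → ℕ} (hc : 0 < c)
    (hm : Tendsto (fun ℓ : ℕ => (m ℓ : ℝ) / ℓ) atTop (𝓝 c)) :
    Tendsto (fun ℓ : ℕ => (ℓ : ℝ) ^ β * f (m ℓ)) atTop (𝓝 (c ^ (-β) * a)) := by
  have hm_top : Tendsto m atTop atTop := by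
    refine tendsto_natCast_atTop_iff.1 ((hm.pos_mul_atTop hc tendsto_natCast_atTop_atTop).congr' ?_)
    filter_upwards [eventually_gt_atTop 0] with ℓ hℓ
    field_simp
  have hratio : Tendsto (fun ℓ : ℕ => ((ℓ : ℝ) / m ℓ) ^ β) atTop (𝓝 (c ^ (-β))) := by
    rw [Real.rpow_neg hc.le, ← Real.inv_rpow hc.le]
    simpa only [Pi.inv_apply, inv_div] using
      (hm.inv₀ hc.ne').rpow_const (Or.inl (inv_ne_zero hc.ne'))
  refine (hratio.mul (hf.comp hm_top)).congr' ?_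
  filter_upwards [hm_top.eventually_gt_atTop 0] with ℓ hℓ
  have hmℓ : (0 : ℝ) < m ℓ := by exact_mod_cast hℓ
  rw [Function.comp_apply, ← mul_assoc, ← Real.mul_rpow (by positivity) hmℓ.le,
    div_mul_cancel₀ _ hmℓ.ne']

lemma unitInterval.norm_one_sub_lt_one {p : unitInterval} (hp : p ≠ 0) : ‖(1 - p : ℝ)‖ < 1 := by
  have : (0 : ℝ) < p := unitInterval.coe_pos.2 (unitInterval.pos_iff_ne_zero.2 hp)
  rw [Real.norm_eq_abs, abs_lt]
  constructor <;> linarith [p.2.2]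

namespace ProbabilityTheory

section Geometric

variable {p : unitInterval}

lemma hasLaw_of_forall_measure_eq {Ω 𝓧 : Type*} [MeasurableSpace Ω] [MeasurableSpace 𝓧]
    [Countable 𝓧] [MeasurableSingletonClass 𝓧] {μ : Measure Ω} {ν : Measure 𝓧} {Y : Ω → 𝓧}
    (hY : Measurable Y) (h : ∀ x, μ {ω | Y ω = x} = ν {x}) : HasLaw Y ν μ where
  aemeasurable := hY.aemeasurable
  map_eq := Measure.ext_of_singleton fun x => by
    rw [Measure.map_apply hY (measurableSet_singleton x)]
    exact h x

lemma memLp_id_map_natCast_geometricMeasure (hp : p ≠ 0) :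
    MemLp id 2 ((geometricMeasure p).map (Nat.cast : ℕ → ℝ)) := by
  refine (memLp_map_measure_iff aestronglyMeasurable_id measurable_from_top.aemeasurable).2 ?_
  refine (memLp_two_iff_integrable_sq measurable_from_top.aestronglyMeasurable).2 ?_
  rw [integrable_geometricMeasure_iff hp]
  refine ((summable_pow_mul_geometric_of_norm_lt_one 2
    (unitInterval.norm_one_sub_lt_one hp)).mul_right (p : ℝ)).congr fun n => ?_
  simp only [Function.comp_apply, id, norm_pow, Real.norm_natCast]
  ring

lemma integral_id_map_natCast_geometricMeasure (hp : p ≠ 0) :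
    ∫ x, x ∂(geometricMeasure p).map (Nat.cast : ℕ → ℝ) = (1 - p) / p := by
  have hp' : (p : ℝ) ≠ 0 := unitInterval.coe_ne_zero.2 hp
  rw [integral_map (f := fun x : ℝ => x) measurable_from_top.aemeasurable
    aestronglyMeasurable_id, integral_geometricMeasure hp]
  calc ∑' n : ℕ, ((1 - p : ℝ) ^ n * p) • (n : ℝ)
      = (∑' n : ℕ, n * (1 - p : ℝ) ^ n) * p := by
        rw [← tsum_mul_right]; congr 1 with n; rw [smul_eq_mul]; ring
    _ = (1 - p) / p := by
        rw [tsum_coe_mul_geometric_of_norm_lt_one (unitInterval.norm_one_sub_lt_one hp),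
          sub_sub_cancel]
        field_simp

lemma geometricMeasure_singleton_of_coe_eq_half (hp : (p : ℝ) = 2⁻¹) (n : ℕ) :
    geometricMeasure p {n} = 2⁻¹ ^ (n + 1) := by
  have hp0 : p ≠ 0 := fun h => by norm_num [h] at hp
  rw [geometricMeasure_singleton hp0, hp, show (1 - 2⁻¹ : ℝ) = 2⁻¹ by norm_num, ← pow_succ,
    ENNReal.ofReal_pow (by norm_num), ENNReal.ofReal_inv_of_pos (by norm_num),
    ENNReal.ofReal_ofNat]

end Geometric

section Concentration

variable {Ω : Type*} [MeasurableSpace Ω] {μ : Measure Ω} [IsFiniteMeasure μ] {ν : Measure ℝ}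
  {X : ℕ → Ω → ℝ}

lemma measureReal_abs_sum_range_sub_ge_le (hX : ∀ i, HasLaw (X i) ν μ) (hν : MemLp id 2 ν)
    (hindep : Pairwise fun i j => X i ⟂ᵢ[μ] X j) (ℓ : ℕ) {r : ℝ} (hr : 0 < r) :
    μ.real {ω | r ≤ |∑ i ∈ range ℓ, X i ω - ℓ * ∫ x, x ∂ν|} ≤ ℓ * Var[id; ν] / r ^ 2 := by
  have hmem : ∀ i, MemLp (X i) 2 μ := fun i =>
    (memLp_map_measure_iff aestronglyMeasurable_id (hX i).aemeasurable).1 ((hX i).map_eq ▸ hν)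
  have hmean : μ[∑ i ∈ range ℓ, X i] = ℓ * ∫ x, x ∂ν := by
    simp only [Finset.sum_apply]
    rw [integral_finsetSum _ fun i _ => (hmem i).integrable one_le_two]
    simp [(hX _).integral_eq]
  have hvar : Var[∑ i ∈ range ℓ, X i; μ] = ℓ * Var[id; ν] := by
    rw [IndepFun.variance_sum (fun i _ => hmem i) fun i _ j _ hij => hindep hij]
    simp [(hX _).variance_eq]
  have hcheb := meas_ge_le_variance_div_sq (memLp_finsetSum' (range ℓ) fun i _ => hmem i) hr
  rw [hmean, hvar] at hcheb
  simp only [Finset.sum_apply] at hcheb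
  exact ENNReal.toReal_le_of_le_ofReal
    (div_nonneg (mul_nonneg ℓ.cast_nonneg (variance_nonneg _ _)) (sq_nonneg r)) hcheb

lemma tendsto_rpow_mul_measureReal_abs_sum_range_sub_ge (hX : ∀ i, HasLaw (X i) ν μ)
    (hν : MemLp id 2 ν) (hindep : Pairwise fun i j => X i ⟂ᵢ[μ] X j) {β : ℝ} (hβ : β < 1)
    {ε : ℝ} (hε : 0 < ε) :
    Tendsto (fun ℓ : ℕ => (ℓ : ℝ) ^ β *
      μ.real {ω | ε * ℓ ≤ |∑ i ∈ range ℓ, X i ω - ℓ * ∫ x, x ∂ν|}) atTop (𝓝 0) := by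
  have hlim : Tendsto (fun ℓ : ℕ => Var[id; ν] / ε ^ 2 * (ℓ : ℝ) ^ (-(1 - β))) atTop (𝓝 0) := by
    simpa using ((tendsto_rpow_neg_atTop (sub_pos.2 hβ)).comp
      tendsto_natCast_atTop_atTop).const_mul (Var[id; ν] / ε ^ 2)
  refine squeeze_zero' (Eventually.of_forall fun ℓ => by positivity) ?_ hlim
  filter_upwards [eventually_gt_atTop 0] with ℓ hℓ
  have hℓ' : (0 : ℝ) < ℓ := by exact_mod_cast hℓ
  calc (ℓ : ℝ) ^ β * μ.real {ω | ε * ℓ ≤ |∑ i ∈ range ℓ, X i ω - ℓ * ∫ x, x ∂ν|}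
      ≤ (ℓ : ℝ) ^ β * (ℓ * Var[id; ν] / (ε * ℓ) ^ 2) := by
        gcongr
        exact measureReal_abs_sum_range_sub_ge_le hX hν hindep ℓ (by positivity)
    _ = Var[id; ν] / ε ^ 2 * (ℓ : ℝ) ^ (-(1 - β)) := by
        rw [neg_sub, Real.rpow_sub_one hℓ'.ne']
        field_simp

end Concentration

section TimeChange

variable {Ω : Type*} [MeasurableSpace Ω] (μ : Measure Ω) [IsFiniteMeasure μ]

lemma measureReal_setOf_lt_le_add {α : Type*} [LinearOrder α] (S T C : Ω → α) :
    μ.real {ω | S ω < T ω} ≤ μ.real {ω | S ω < C ω} + μ.real {ω | C ω < T ω} :=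
  (measureReal_mono fun ω (h : S ω < T ω) =>
    (lt_or_ge (S ω) (C ω)).imp id fun hC => hC.trans_lt h).trans (measureReal_union_le _ _)

lemma measureReal_lt_le_add_of_add_le (S T : Ω → ℕ) {c : ℕ} {x r : ℝ} (h : c + r ≤ x) :
    μ.real {ω | S ω < T ω} ≤ μ.real {ω | c < T ω} + μ.real {ω | r ≤ |(S ω : ℝ) - x|} := by
  refine (measureReal_setOf_lt_le_add μ S T fun _ => c).trans ?_
  rw [add_comm]
  refine add_le_add le_rfl (measureReal_mono fun ω (hω : S ω < c) => ?_)
  have : (S ω : ℝ) < c := by exact_mod_cast hω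
  show r ≤ |(S ω : ℝ) - x|
  rw [abs_sub_comm]
  exact le_abs.2 (Or.inl (by linarith))

lemma measureReal_const_lt_le_add_of_add_le (S T : Ω → ℕ) {c : ℕ} {x r : ℝ} (h : x + r ≤ c) :
    μ.real {ω | c < T ω} ≤ μ.real {ω | S ω < T ω} + μ.real {ω | r ≤ |(S ω : ℝ) - x|} := by
  refine (measureReal_setOf_lt_le_add μ (fun _ => c) T S).trans ?_
  rw [add_comm]
  refine add_le_add le_rfl (measureReal_mono fun ω (hω : c < S ω) => ?_)
  have : (c : ℝ) < S ω := by exact_mod_cast hω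
  show r ≤ |(S ω : ℝ) - x|
  exact le_abs.2 (Or.inl (by linarith))

lemma eventually_rpow_mul_measureReal_lt_mem_Ioo {S : ℕ → Ω → ℕ} {T : Ω → ℕ} {β a : ℝ}
    (htail : Tendsto (fun m : ℕ => (m : ℝ) ^ β * μ.real {ω | m < T ω}) atTop (𝓝 a))
    (hS : ∀ ε > 0, Tendsto (fun ℓ : ℕ => (ℓ : ℝ) ^ β *
      μ.real {ω | ε * ℓ ≤ |(S ℓ ω : ℝ) - ℓ|}) atTop (𝓝 0))
    {ε : ℝ} (hε0 : 0 < ε) (hε1 : ε < 1) {δ : ℝ} (hδ : 0 < δ) :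
    ∀ᶠ ℓ : ℕ in atTop, (ℓ : ℝ) ^ β * μ.real {ω | S ℓ ω < T ω} ∈
      Set.Ioo ((1 + ε) ^ (-β) * a - δ) ((1 - ε) ^ (-β) * a + δ) := by
  have hup := (tendsto_rpow_mul_comp_of_tendsto_div htail (sub_pos.2 hε1)
    ((tendsto_nat_floor_mul_div_atTop (sub_pos.2 hε1).le).comp tendsto_natCast_atTop_atTop)).add
    (hS ε hε0)
  have hlow := (tendsto_rpow_mul_comp_of_tendsto_div htail (by linarith : (0 : ℝ) < 1 + ε)
    ((tendsto_nat_ceil_mul_div_atTop (by linarith : (0 : ℝ) ≤ 1 + ε)).comp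
      tendsto_natCast_atTop_atTop)).sub (hS ε hε0)
  rw [add_zero] at hup
  rw [sub_zero] at hlow
  filter_upwards [hup.eventually_lt_const (lt_add_of_pos_right _ hδ),
    hlow.eventually_const_lt (sub_lt_self _ hδ)] with ℓ hℓup hℓlow
  have hℓ : (0 : ℝ) ≤ ℓ := ℓ.cast_nonneg
  have hfloor := measureReal_lt_le_add_of_add_le μ (S ℓ) T (c := ⌊(1 - ε) * ℓ⌋₊) (x := ℓ)
    (r := ε * ℓ) (by linarith [Nat.floor_le (mul_nonneg (sub_pos.2 hε1).le hℓ)])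
  have hceil := measureReal_const_lt_le_add_of_add_le μ (S ℓ) T (c := ⌈(1 + ε) * ℓ⌉₊) (x := ℓ)
    (r := ε * ℓ) (by linarith [Nat.le_ceil ((1 + ε) * ℓ)])
  have hpow : (0 : ℝ) ≤ (ℓ : ℝ) ^ β := by positivity
  have hlo' := mul_le_mul_of_nonneg_left hceil hpow
  have hup' := mul_le_mul_of_nonneg_left hfloor hpow
  rw [mul_add] at hlo' hup'
  constructor <;> linarith

theorem tendsto_rpow_mul_measureReal_lt_of_concentration {S : ℕ → Ω → ℕ} {T : Ω → ℕ} {β a : ℝ}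
    (htail : Tendsto (fun m : ℕ => (m : ℝ) ^ β * μ.real {ω | m < T ω}) atTop (𝓝 a))
    (hS : ∀ ε > 0, Tendsto (fun ℓ : ℕ => (ℓ : ℝ) ^ β *
      μ.real {ω | ε * ℓ ≤ |(S ℓ ω : ℝ) - ℓ|}) atTop (𝓝 0)) :
    Tendsto (fun ℓ : ℕ => (ℓ : ℝ) ^ β * μ.real {ω | S ℓ ω < T ω}) atTop (𝓝 a) := by
  have hlim : ∀ s : ℝ, Tendsto (fun ε => (1 + s * ε) ^ (-β) * a) (𝓝[>] 0) (𝓝 a) := fun s => by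
    have : ContinuousAt (fun ε : ℝ => (1 + s * ε) ^ (-β) * a) 0 := by fun_prop (disch := norm_num)
    simpa using this.tendsto.mono_left nhdsWithin_le_nhds
  refine tendsto_of_forall_eventually_between (hlim 1) (hlim (-1)) ?_
  filter_upwards [Ioo_mem_nhdsGT one_pos] with ε ⟨hε0, hε1⟩ δ hδ
  simpa [← sub_eq_add_neg] using
    eventually_rpow_mul_measureReal_lt_mem_Ioo μ htail hS hε0 hε1 hδ

end TimeChange

end ProbabilityTheory

theorem tail_through_geometric_time_change_general
    {Ω : Type*} [MeasurableSpace Ω] (μ : Measure Ω) [IsProbabilityMeasure μ]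
    (θ a : ℝ) (hθ : θ ∈ Set.Ioo (0 : ℝ) 1)
    (G : ℕ → Ω → ℕ) (τ : Ω → ℕ)
    (hGmeas : ∀ i, Measurable (G i))
    (hiid : iIndepFun G μ)
    (hgeom : ∀ i, ∀ j : ℕ, μ {ω | G i ω = j} = (2 : ENNReal)⁻¹ ^ (j + 1))
    (htail : Tendsto (fun m : ℕ => (m : ℝ) ^ (1 - θ) * (μ {ω | m < τ ω}).toReal)
      atTop (nhds a)) :
    Tendsto
      (fun ℓ : ℕ =>
        (ℓ : ℝ) ^ (1 - θ) * (μ {ω | (∑ i ∈ Finset.range ℓ, G i ω) < τ ω}).toReal)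
      atTop (nhds a) := by
  obtain ⟨p, hp⟩ : ∃ p : unitInterval, (p : ℝ) = 2⁻¹ := ⟨⟨2⁻¹, by norm_num, by norm_num⟩, rfl⟩
  have hp0 : p ≠ 0 := fun h => by norm_num [h] at hp
  have hlaw : ∀ i, HasLaw (fun ω => (G i ω : ℝ)) ((geometricMeasure p).map Nat.cast) μ := fun i =>
    HasLaw.comp ⟨measurable_from_top.aemeasurable, rfl⟩ <| hasLaw_of_forall_measure_eq (hGmeas i)
      fun j => (hgeom i j).trans (geometricMeasure_singleton_of_coe_eq_half hp j).symm
  have hmean : ∫ x, x ∂(geometricMeasure p).map (Nat.cast : ℕ → ℝ) = 1 := by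
    rw [integral_id_map_natCast_geometricMeasure hp0, hp]
    norm_num
  have hdev : ∀ ε > 0, Tendsto (fun ℓ : ℕ => (ℓ : ℝ) ^ (1 - θ) *
      μ.real {ω | ε * ℓ ≤ |((∑ i ∈ range ℓ, G i ω : ℕ) : ℝ) - ℓ|}) atTop (𝓝 0) := fun ε hε => by
    simpa [hmean] using tendsto_rpow_mul_measureReal_abs_sum_range_sub_ge hlaw
      (memLp_id_map_natCast_geometricMeasure hp0)
      (fun i j hij => (hiid.indepFun hij).comp measurable_from_top measurable_from_top)
      (β := 1 - θ) (by linarith [hθ.1]) hε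
  simpa only [measureReal_def] using
    tendsto_rpow_mul_measureReal_lt_of_concentration μ htail hdev

/-- Key probabilistic estimate: if (G_i) are i.i.d. geometric(1/2) random variables on
{0,1,2,…} (so P(G_i = j) = 2^{−j−1}), N_ℓ = G_1 + ⋯ + G_ℓ, and τ is an independent
ℕ-valued random variable with m^{1−θ}·P(τ > m) → a, then ℓ^{1−θ}·P(τ > N_ℓ) → a. -/
theorem tail_through_geometric_time_change
    {Ω : Type*} [MeasurableSpace Ω] (μ : Measure Ω) [IsProbabilityMeasure μ]
    (θ a : ℝ) (hθ : θ ∈ Set.Ioo (0 : ℝ) 1) (ha : 0 < a)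
    (G : ℕ → Ω → ℕ) (τ : Ω → ℕ)
    (hGmeas : ∀ i, Measurable (G i)) (hτmeas : Measurable τ)
    (hiid : iIndepFun G μ)
    (hgeom : ∀ i, ∀ j : ℕ, μ {ω | G i ω = j} = (2 : ENNReal)⁻¹ ^ (j + 1))
    (hτindep : IndepFun τ (fun ω i => G i ω) μ)
    (htail : Tendsto (fun m : ℕ => (m : ℝ) ^ (1 - θ) * (μ {ω | m < τ ω}).toReal)
      atTop (nhds a)) :
    Tendsto
      (fun ℓ : ℕ =>
        (ℓ : ℝ) ^ (1 - θ) * (μ {ω | (∑ i ∈ Finset.range ℓ, G i ω) < τ ω}).toReal)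
      atTop (nhds a) :=
  tail_through_geometric_time_change_general μ θ a hθ G τ hGmeas hiid hgeom htail
end
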